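/- Given any finite set S ⊆ [n]^k and any nonempty subset of indices I ⊆ [k], there exist a point q ∈ [n]^k and a sign vector φ ∈ {±1}^I such that |{x ∈ S : φ_i(x_i − q_i) ≥ 0 for all i ∈ I}| ≥ |S| / 2^{|I|} and |{x ∈ S : φ_i(x_i − q_i) ≤ 0 for all i ∈ I}| ≥ |S| / 2^{|I|}. -/
import Mathlib


/-- Symbols of the partial-information alphabet: −1, 0, 1, ≤, ≥, ◇. -/
inductive PISym : Type where
  | neg | zero | pos | sle | sge | dia
deriving DecidableEq

/-- Points of the `k`-dimensional grid, as integer vectors. -/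
abbrev Pt (k : ℕ) := Fin k → ℤ

/-- `x ∈ [n]^k`. -/
def inGrid (n k : ℕ) (x : Pt k) : Prop := ∀ i, 1 ≤ x i ∧ x i ≤ (n : ℤ)

/-- The `i`-th standard unit vector. -/
def eVec (k : ℕ) (i : Fin k) : Pt k := fun j => if j = i then 1 else 0

/-- A slice of `[n]^k`: `none` marks a free coordinate. -/
abbrev Slice (k : ℕ) := Fin k → Option ℤ

def fullSlice (k : ℕ) : Slice k := fun _ => none

def validSlice (n : ℕ) {k : ℕ} (s : Slice k) : Prop :=
  ∀ i v, s i = some v → 1 ≤ v ∧ v ≤ (n : ℤ)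

def inSlice {k : ℕ} (s : Slice k) (x : Pt k) : Prop :=
  ∀ i v, s i = some v → x i = v

/-- Monotone partial-information function (Definition 2.4). -/
def MonoPI (n k : ℕ) (p1 : Pt k → Fin k → PISym) (p2 : Pt k → PISym) : Prop :=
  (∀ x, inGrid n k x → p2 x = PISym.pos ∨ p2 x = PISym.neg ∨ p2 x = PISym.dia) ∧
  (∀ x y, inGrid n k x → inGrid n k y → ∀ i : Fin k,
    (p1 x i = PISym.pos → x ≤ y → y i = x i →
      p1 y i = PISym.pos ∧
        (y i < (n : ℤ) → p1 (y + eVec k i) i ∈ ({PISym.pos, PISym.zero, PISym.sge} : Set PISym))) ∧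
    (p1 x i = PISym.neg → y ≤ x → y i = x i →
      p1 y i = PISym.neg ∧
        (1 < y i → p1 (y - eVec k i) i ∈ ({PISym.neg, PISym.zero, PISym.sle} : Set PISym))) ∧
    (p1 x i = PISym.zero → y ≤ x → y i = x i →
      p1 y i ∈ ({PISym.zero, PISym.neg, PISym.sle} : Set PISym)) ∧
    (p1 x i = PISym.zero → x ≤ y → y i = x i →
      p1 y i ∈ ({PISym.zero, PISym.pos, PISym.sge} : Set PISym)) ∧
    (p1 x i = PISym.sle → y ≤ x → y i = x i → p1 y i ∈ ({PISym.neg, PISym.sle} : Set PISym)) ∧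
    (p1 x i = PISym.sge → x ≤ y → y i = x i → p1 y i ∈ ({PISym.pos, PISym.sge} : Set PISym))) ∧
  (∀ x, inGrid n k x → ∀ i : Fin k,
    (x i = 1 → p1 x i ∈ ({PISym.zero, PISym.pos, PISym.sge} : Set PISym)) ∧
    (x i = (n : ℤ) → p1 x i ∈ ({PISym.zero, PISym.neg, PISym.sle} : Set PISym))) ∧
  (∀ x y, inGrid n k x → inGrid n k y → x ≤ y →
    (p2 x = PISym.pos → p2 y = PISym.pos) ∧ (p2 y = PISym.neg → p2 x = PISym.neg))

/-- Postfixed points of a PI function on a slice. -/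
def Post (n k : ℕ) (p1 : Pt k → Fin k → PISym) (s : Slice k) : Set (Pt k) :=
  {x | inGrid n k x ∧ inSlice s x ∧
       ∀ i, s i = none → p1 x i ∈ ({PISym.pos, PISym.zero, PISym.sge} : Set PISym)}

/-- Prefixed points of a PI function on a slice. -/
def Pre (n k : ℕ) (p1 : Pt k → Fin k → PISym) (s : Slice k) : Set (Pt k) :=
  {x | inGrid n k x ∧ inSlice s x ∧
       ∀ i, s i = none → p1 x i ∈ ({PISym.neg, PISym.zero, PISym.sle} : Set PISym)}

/-- Safe PI functions (Definition 2.8). -/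
def SafePI (n k : ℕ) (p1 : Pt k → Fin k → PISym) (p2 : Pt k → PISym) : Prop :=
  MonoPI n k p1 p2 ∧
  ∀ s : Slice k, validSlice n s →
    (∀ J, IsGreatest (Post n k p1 s) J →
      ∀ x, inGrid n k x → inSlice s x → x ≤ J → x ≠ J →
        (∀ i, s i = none → x i < J i →
          p1 x i ∈ ({PISym.neg, PISym.zero, PISym.pos} : Set PISym)) ∧
        (∃ i, s i = none ∧ x i < J i ∧ p1 x i = PISym.pos)) ∧
    (∀ M, IsLeast (Pre n k p1 s) M →
      ∀ x, inGrid n k x → inSlice s x → M ≤ x → x ≠ M →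
        (∀ i, s i = none → M i < x i →
          p1 x i ∈ ({PISym.neg, PISym.zero, PISym.pos} : Set PISym)) ∧
        (∃ i, s i = none ∧ M i < x i ∧ p1 x i = PISym.neg))

/-- `x^{−i}` for `i ∈ [k]`. -/
def dminus {k : ℕ} (i : Fin k) (x : Pt k) : Pt k :=
  fun j => if j ≠ i ∧ 1 < x j then x j - 1 else x j

/-- `x^{−(k+1)}`. -/
def dminusAll {k : ℕ} (x : Pt k) : Pt k :=
  fun j => if 1 < x j then x j - 1 else x j

/-- `x^{+i}` for `i ∈ [k]`. -/
def dplus (n : ℕ) {k : ℕ} (i : Fin k) (x : Pt k) : Pt k :=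
  fun j => if j ≠ i ∧ x j < (n : ℤ) then x j + 1 else x j

/-- `x^{+(k+1)}`. -/
def dplusAll (n : ℕ) {k : ℕ} (x : Pt k) : Pt k :=
  fun j => if x j < (n : ℤ) then x j + 1 else x j

def IntPlus {k : ℕ} (p1 : Pt k → Fin k → PISym) (i : Fin k) : Set (Pt k) :=
  {x | p1 (dminus i x) i = PISym.pos}

def IntPlusLast {k : ℕ} (p1 : Pt k → Fin k → PISym) (p2 : Pt k → PISym) : Set (Pt k) :=
  {x | p2 (dminusAll x) = PISym.pos ∨
    ∃ i, p1 (dminus i x) i ∈ ({PISym.pos, PISym.zero, PISym.sge} : Set PISym) ∧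
         p2 (dminus i x) = PISym.pos}

def IntMinus (n : ℕ) {k : ℕ} (p1 : Pt k → Fin k → PISym) (i : Fin k) : Set (Pt k) :=
  {x | p1 (dplus n i x) i = PISym.neg}

def IntMinusLast (n : ℕ) {k : ℕ} (p1 : Pt k → Fin k → PISym) (p2 : Pt k → PISym) : Set (Pt k) :=
  {x | p2 (dplusAll n x) = PISym.neg ∨
    ∃ i, p1 (dplus n i x) i ∈ ({PISym.neg, PISym.zero, PISym.sle} : Set PISym) ∧
         p2 (dplus n i x) = PISym.neg}

/-- `Cand⁺(p)` relative to `J = J(p)` and `M = M(p)`. -/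
def CandPlus (n k : ℕ) (p1 : Pt k → Fin k → PISym) (p2 : Pt k → PISym) (J M : Pt k) :
    Set (Pt k) :=
  {x | inGrid n k x ∧ J ≤ x ∧ x ≤ M ∧
    (∀ i, p1 x i ≠ PISym.neg ∧ x ∉ IntPlus p1 i) ∧
    p2 x ≠ PISym.neg ∧ x ∉ IntPlusLast p1 p2}

/-- `Cand⁻(p)` relative to `J = J(p)` and `M = M(p)`. -/
def CandMinus (n k : ℕ) (p1 : Pt k → Fin k → PISym) (p2 : Pt k → PISym) (J M : Pt k) :
    Set (Pt k) :=
  {x | inGrid n k x ∧ J ≤ x ∧ x ≤ M ∧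
    (∀ i, p1 x i ≠ PISym.pos ∧ x ∉ IntMinus n p1 i) ∧
    p2 x ≠ PISym.pos ∧ x ∉ IntMinusLast n p1 p2}

/-- The information partial order on symbols: `symDom a b` means `a ⇒ b`. -/
def symDom (a b : PISym) : Prop :=
  b = PISym.dia ∨ a = b ∨ (a = PISym.pos ∧ b = PISym.sge) ∨
  (a = PISym.zero ∧ (b = PISym.sge ∨ b = PISym.sle)) ∨ (a = PISym.neg ∧ b = PISym.sle)

/-- `p ⇒ p'`: `p` dominates (is more informative than) `p'`. -/
def PIdom (n k : ℕ) (p1 : Pt k → Fin k → PISym) (p2 : Pt k → PISym)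
    (q1 : Pt k → Fin k → PISym) (q2 : Pt k → PISym) : Prop :=
  ∀ x, inGrid n k x → (∀ i, symDom (p1 x i) (q1 x i)) ∧ symDom (p2 x) (q2 x)

/-- A sign value `a ∈ {−1,0,1}` is consistent with a symbol `b`. -/
def consS (a : ℤ) (b : PISym) : Prop :=
  match b with
  | PISym.dia => True
  | PISym.pos => a = 1
  | PISym.neg => a = -1
  | PISym.zero => a = 0
  | PISym.sge => a = 0 ∨ a = 1
  | PISym.sle => a = -1 ∨ a = 0

/-- A sign function `f` is consistent with the PI function `p` (i.e., `f ⇒ p`). -/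
def SignCons (n k : ℕ) (f1 : Pt k → Pt k) (f2 : Pt k → ℤ)
    (p1 : Pt k → Fin k → PISym) (p2 : Pt k → PISym) : Prop :=
  ∀ x, inGrid n k x → (∀ i, consS (f1 x i) (p1 x i)) ∧ consS (f2 x) (p2 x)

/-- Monotone sign function: `x ↦ (x + f1 x, f2 x)` is well defined and monotone. -/
def MonoSign (n k : ℕ) (f1 : Pt k → Pt k) (f2 : Pt k → ℤ) : Prop :=
  (∀ x, inGrid n k x →
    (∀ i, f1 x i = -1 ∨ f1 x i = 0 ∨ f1 x i = 1) ∧ (f2 x = 1 ∨ f2 x = -1)) ∧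
  (∀ x, inGrid n k x → inGrid n k (x + f1 x)) ∧
  (∀ a b, inGrid n k a → inGrid n k b → a ≤ b → a + f1 a ≤ b + f1 b ∧ f2 a ≤ f2 b)

def PostF (n k : ℕ) (f1 : Pt k → Pt k) (s : Slice k) : Set (Pt k) :=
  {x | inGrid n k x ∧ inSlice s x ∧ ∀ i, s i = none → 0 ≤ f1 x i}

def PreF (n k : ℕ) (f1 : Pt k → Pt k) (s : Slice k) : Set (Pt k) :=
  {x | inGrid n k x ∧ inSlice s x ∧ ∀ i, s i = none → f1 x i ≤ 0}

/-- Safe sign functions (conditions (1') and (2') of Definition 2.8). -/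
def SafeSign (n k : ℕ) (f1 : Pt k → Pt k) (f2 : Pt k → ℤ) : Prop :=
  MonoSign n k f1 f2 ∧
  ∀ s : Slice k, validSlice n s →
    (∀ J, IsGreatest (PostF n k f1 s) J →
      ∀ x, inGrid n k x → inSlice s x → x ≤ J → x ≠ J →
        ∃ i, s i = none ∧ x i < J i ∧ f1 x i = 1) ∧
    (∀ M, IsLeast (PreF n k f1 s) M →
      ∀ x, inGrid n k x → inSlice s x → M ≤ x → x ≠ M →
        ∃ i, s i = none ∧ M i < x i ∧ f1 x i = -1)

/-- The revealed solutions of a PI function. -/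
def SolPI (n k : ℕ) (p1 : Pt k → Fin k → PISym) (p2 : Pt k → PISym) : Set (Pt k) :=
  {x | inGrid n k x ∧
    (((∀ i, p1 x i ∈ ({PISym.pos, PISym.zero, PISym.sge} : Set PISym)) ∧ p2 x = PISym.pos) ∨
     ((∀ i, p1 x i ∈ ({PISym.neg, PISym.zero, PISym.sle} : Set PISym)) ∧ p2 x = PISym.neg))}

/-- `x ≪_s y` : `x ⪯ y` with strict inequality in every free coordinate of `s`. -/
def lls {k : ℕ} (s : Slice k) (x y : Pt k) : Prop :=
  x ≤ y ∧ ∀ i, s i = none → x i < y i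

/-- `s` is a slice witnessing `ŝ(x,p) ≠ nil`: `x ∈ L_s` and `x ≪_s J_s(p)`. -/
def HasSlice (n k : ℕ) (p1 : Pt k → Fin k → PISym) (x : Pt k) (s : Slice k) : Prop :=
  validSlice n s ∧ inSlice s x ∧ ∃ J, IsGreatest (Post n k p1 s) J ∧ lls s x J

/-- `s = ŝ(x,p)`: `s` is the maximal slice with `x ∈ L_s` and `x ≪_s J_s(p)`. -/
def MaxSlice (n k : ℕ) (p1 : Pt k → Fin k → PISym) (x : Pt k) (s : Slice k) : Prop :=
  HasSlice n k p1 x s ∧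
  ∀ s', HasSlice n k p1 x s' → ∀ i, s' i = none → s i = none

open Classical in
lemma median_lemma {α : Type*} (T : Finset α) (g : α → ℤ) (n : ℤ) (hn : 1 ≤ n)
    (hg : ∀ x ∈ T, 1 ≤ g x ∧ g x ≤ n) :
    ∃ m : ℤ, 1 ≤ m ∧ m ≤ n ∧
      T.card ≤ 2 * (T.filter (fun x => m ≤ g x)).card ∧
      T.card ≤ 2 * (T.filter (fun x => g x ≤ m)).card := by
  classical
  set A : Finset ℤ := (Finset.Icc 1 n).filter
      (fun v => T.card ≤ 2 * (T.filter (fun x => v ≤ g x)).card) with hA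
  have h1A : (1:ℤ) ∈ A := by
    simp only [hA, Finset.mem_filter, Finset.mem_Icc]
    refine ⟨⟨le_refl _, hn⟩, ?_⟩
    have hT : T.filter (fun x => 1 ≤ g x) = T :=
      Finset.filter_true_of_mem (fun x hx => (hg x hx).1)
    rw [hT]; omega
  have hAne : A.Nonempty := ⟨1, h1A⟩
  set m := A.max' hAne with hm
  have hmA : m ∈ A := A.max'_mem hAne
  simp only [hA, Finset.mem_filter, Finset.mem_Icc] at hmA
  refine ⟨m, hmA.1.1, hmA.1.2, hmA.2, ?_⟩
  have hsplit : (T.filter (fun x => g x ≤ m)).card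
      + (T.filter (fun x => ¬ (g x ≤ m))).card = T.card :=
    Finset.card_filter_add_card_filter_not (p := fun x => g x ≤ m)
  have hnegeq : T.filter (fun x => ¬ (g x ≤ m)) = T.filter (fun x => m + 1 ≤ g x) := by
    apply Finset.filter_congr
    intro x _
    constructor <;> intro h <;> omega
  rw [hnegeq] at hsplit
  have hupper : 2 * (T.filter (fun x => m + 1 ≤ g x)).card ≤ T.card := by
    rcases eq_or_lt_of_le hmA.1.2 with heq | hlt
    · have : T.filter (fun x => m + 1 ≤ g x) = ∅ := by
        apply Finset.filter_eq_empty_iff.mpr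
        intro x hx
        have := (hg x hx).2
        omega
      rw [this]; simp
    · have hnotmem : m + 1 ∉ A := by
        intro hmem
        have := A.le_max' _ hmem
        omega
      simp only [hA, Finset.mem_filter, Finset.mem_Icc, not_and, not_le] at hnotmem
      have := hnotmem ⟨by omega, by omega⟩
      omega
  omega

open Classical in
lemma balanced_aux (n k : ℕ) (hn : 1 ≤ n) (S : Finset (Pt k))
    (hS : ∀ x ∈ S, inGrid n k x) (I : Finset (Fin k)) :
    ∃ (q : Pt k) (φ : Fin k → ℤ), inGrid n k q ∧ (∀ i ∈ I, φ i = 1 ∨ φ i = -1) ∧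
      S.card ≤ 2 ^ I.card * (S.filter (fun x => ∀ i ∈ I, 0 ≤ φ i * (x i - q i))).card ∧
      S.card ≤ 2 ^ I.card * (S.filter (fun x => ∀ i ∈ I, φ i * (x i - q i) ≤ 0)).card := by
  classical
  induction I using Finset.induction_on with
  | empty =>
    refine ⟨fun _ => 1, fun _ => 1, ?_, ?_, ?_, ?_⟩
    · intro i
      refine ⟨le_refl _, ?_⟩
      show (1:ℤ) ≤ (n:ℤ)
      exact_mod_cast hn
    · simp
    · simp
    · simp
  | @insert i I hiI IH =>
    obtain ⟨q, φ, hq, hφ, h1, h2⟩ := IH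
    obtain ⟨T1, hT1⟩ : ∃ T, S.filter (fun x => ∀ j ∈ I, 0 ≤ φ j * (x j - q j)) = T := ⟨_, rfl⟩
    obtain ⟨T2, hT2⟩ : ∃ T, S.filter (fun x => ∀ j ∈ I, φ j * (x j - q j) ≤ 0) = T := ⟨_, rfl⟩
    rw [hT1] at h1
    rw [hT2] at h2
    obtain ⟨m, hm1, hmn, hmed1, hmed2⟩ := median_lemma T1 (fun x => x i) n
      (by exact_mod_cast hn)
      (fun x hx => by
        rw [← hT1] at hx
        exact hS x (Finset.mem_filter.mp hx).1 i)
    -- cover T2 by the two halves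
    have hcover : T2.card ≤ (T2.filter (fun x => x i ≤ m)).card
        + (T2.filter (fun x => m ≤ x i)).card := by
      have hsub : T2 ⊆ T2.filter (fun x => x i ≤ m) ∪ T2.filter (fun x => m ≤ x i) := by
        intro x hx
        rcases le_total (x i) m with h | h
        · exact Finset.mem_union_left _ (Finset.mem_filter.mpr ⟨hx, h⟩)
        · exact Finset.mem_union_right _ (Finset.mem_filter.mpr ⟨hx, h⟩)
      calc T2.card ≤ (T2.filter (fun x => x i ≤ m) ∪ T2.filter (fun x => m ≤ x i)).card :=
            Finset.card_le_card hsub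
        _ ≤ _ := Finset.card_union_le _ _
    have hqgrid : inGrid n k (Function.update q i m) := by
      intro j
      by_cases hji : j = i
      · subst hji; simp [hm1, hmn]
      · rw [Function.update_of_ne hji]; exact hq j
    have hcardins : (insert i I).card = I.card + 1 := Finset.card_insert_of_notMem hiI
    have hdis : T2.card ≤ 2 * (T2.filter (fun x => x i ≤ m)).card ∨
        T2.card ≤ 2 * (T2.filter (fun x => m ≤ x i)).card := by
      obtain ⟨a, ha⟩ : ∃ a, (T2.filter (fun x => x i ≤ m)).card = a := ⟨_, rfl⟩
      obtain ⟨b, hb⟩ : ∃ b, (T2.filter (fun x => m ≤ x i)).card = b := ⟨_, rfl⟩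
      rw [ha, hb] at hcover ⊢
      clear * - hcover
      omega
    rcases hdis with hc | hc
    · -- choose ε = 1
      refine ⟨Function.update q i m, Function.update φ i 1, hqgrid, ?_, ?_, ?_⟩
      · intro j hj
        rcases Finset.mem_insert.mp hj with rfl | hjI
        · left; simp
        · have hji : j ≠ i := by rintro rfl; exact hiI hjI
          rw [Function.update_of_ne hji]; exact hφ j hjI
      · -- ≥ orthant contains T1.filter (m ≤ · i)
        have hsub : T1.filter (fun x => m ≤ x i) ⊆
            S.filter (fun x => ∀ j ∈ insert i I,
              0 ≤ Function.update φ i 1 j * (x j - Function.update q i m j)) := by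
          intro x hx
          obtain ⟨hxT1, hxi⟩ := Finset.mem_filter.mp hx
          rw [← hT1] at hxT1
          obtain ⟨hxS, hP⟩ := Finset.mem_filter.mp hxT1
          refine Finset.mem_filter.mpr ⟨hxS, ?_⟩
          intro j hj
          rcases Finset.mem_insert.mp hj with rfl | hjI
          · simp only [Function.update_self]
            have := hxi
            nlinarith [this]
          · have hji : j ≠ i := by rintro rfl; exact hiI hjI
            rw [Function.update_of_ne hji, Function.update_of_ne hji]
            exact hP j hjI
        have := Finset.card_le_card hsub
        calc S.card ≤ 2 ^ I.card * T1.card := h1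
          _ ≤ 2 ^ I.card * (2 * (T1.filter (fun x => m ≤ x i)).card) :=
              Nat.mul_le_mul_left _ hmed1
          _ ≤ 2 ^ (insert i I).card * (S.filter (fun x => ∀ j ∈ insert i I,
              0 ≤ Function.update φ i 1 j * (x j - Function.update q i m j))).card := by
              rw [hcardins, pow_succ]
              calc 2 ^ I.card * (2 * (T1.filter (fun x => m ≤ x i)).card)
                  = 2 ^ I.card * 2 * (T1.filter (fun x => m ≤ x i)).card := by ring
                _ ≤ _ := Nat.mul_le_mul_left _ this
      · -- ≤ orthant contains T2.filter (· i ≤ m)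
        have hsub : T2.filter (fun x => x i ≤ m) ⊆
            S.filter (fun x => ∀ j ∈ insert i I,
              Function.update φ i 1 j * (x j - Function.update q i m j) ≤ 0) := by
          intro x hx
          obtain ⟨hxT2, hxi⟩ := Finset.mem_filter.mp hx
          rw [← hT2] at hxT2
          obtain ⟨hxS, hP⟩ := Finset.mem_filter.mp hxT2
          refine Finset.mem_filter.mpr ⟨hxS, ?_⟩
          intro j hj
          rcases Finset.mem_insert.mp hj with rfl | hjI
          · simp only [Function.update_self]
            have := hxi
            nlinarith [this]
          · have hji : j ≠ i := by rintro rfl; exact hiI hjI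
            rw [Function.update_of_ne hji, Function.update_of_ne hji]
            exact hP j hjI
        have := Finset.card_le_card hsub
        calc S.card ≤ 2 ^ I.card * T2.card := h2
          _ ≤ 2 ^ I.card * (2 * (T2.filter (fun x => x i ≤ m)).card) :=
              Nat.mul_le_mul_left _ hc
          _ ≤ 2 ^ (insert i I).card * (S.filter (fun x => ∀ j ∈ insert i I,
              Function.update φ i 1 j * (x j - Function.update q i m j) ≤ 0)).card := by
              rw [hcardins, pow_succ]
              calc 2 ^ I.card * (2 * (T2.filter (fun x => x i ≤ m)).card)
                  = 2 ^ I.card * 2 * (T2.filter (fun x => x i ≤ m)).card := by ring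
                _ ≤ _ := Nat.mul_le_mul_left _ this
    · -- choose ε = -1
      refine ⟨Function.update q i m, Function.update φ i (-1), hqgrid, ?_, ?_, ?_⟩
      · intro j hj
        rcases Finset.mem_insert.mp hj with rfl | hjI
        · right; simp
        · have hji : j ≠ i := by rintro rfl; exact hiI hjI
          rw [Function.update_of_ne hji]; exact hφ j hjI
      · -- ≥ orthant contains T1.filter (· i ≤ m)
        have hsub : T1.filter (fun x => x i ≤ m) ⊆
            S.filter (fun x => ∀ j ∈ insert i I,
              0 ≤ Function.update φ i (-1) j * (x j - Function.update q i m j)) := by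
          intro x hx
          obtain ⟨hxT1, hxi⟩ := Finset.mem_filter.mp hx
          rw [← hT1] at hxT1
          obtain ⟨hxS, hP⟩ := Finset.mem_filter.mp hxT1
          refine Finset.mem_filter.mpr ⟨hxS, ?_⟩
          intro j hj
          rcases Finset.mem_insert.mp hj with rfl | hjI
          · simp only [Function.update_self]
            have := hxi
            nlinarith [this]
          · have hji : j ≠ i := by rintro rfl; exact hiI hjI
            rw [Function.update_of_ne hji, Function.update_of_ne hji]
            exact hP j hjI
        have := Finset.card_le_card hsub
        calc S.card ≤ 2 ^ I.card * T1.card := h1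
          _ ≤ 2 ^ I.card * (2 * (T1.filter (fun x => x i ≤ m)).card) :=
              Nat.mul_le_mul_left _ hmed2
          _ ≤ 2 ^ (insert i I).card * (S.filter (fun x => ∀ j ∈ insert i I,
              0 ≤ Function.update φ i (-1) j * (x j - Function.update q i m j))).card := by
              rw [hcardins, pow_succ]
              calc 2 ^ I.card * (2 * (T1.filter (fun x => x i ≤ m)).card)
                  = 2 ^ I.card * 2 * (T1.filter (fun x => x i ≤ m)).card := by ring
                _ ≤ _ := Nat.mul_le_mul_left _ this
      · -- ≤ orthant contains T2.filter (m ≤ · i)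
        have hsub : T2.filter (fun x => m ≤ x i) ⊆
            S.filter (fun x => ∀ j ∈ insert i I,
              Function.update φ i (-1) j * (x j - Function.update q i m j) ≤ 0) := by
          intro x hx
          obtain ⟨hxT2, hxi⟩ := Finset.mem_filter.mp hx
          rw [← hT2] at hxT2
          obtain ⟨hxS, hP⟩ := Finset.mem_filter.mp hxT2
          refine Finset.mem_filter.mpr ⟨hxS, ?_⟩
          intro j hj
          rcases Finset.mem_insert.mp hj with rfl | hjI
          · simp only [Function.update_self]
            have := hxi
            nlinarith [this]
          · have hji : j ≠ i := by rintro rfl; exact hiI hjI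
            rw [Function.update_of_ne hji, Function.update_of_ne hji]
            exact hP j hjI
        have := Finset.card_le_card hsub
        calc S.card ≤ 2 ^ I.card * T2.card := h2
          _ ≤ 2 ^ I.card * (2 * (T2.filter (fun x => m ≤ x i)).card) :=
              Nat.mul_le_mul_left _ hc
          _ ≤ 2 ^ (insert i I).card * (S.filter (fun x => ∀ j ∈ insert i I,
              Function.update φ i (-1) j * (x j - Function.update q i m j) ≤ 0)).card := by
              rw [hcardins, pow_succ]
              calc 2 ^ I.card * (2 * (T2.filter (fun x => m ≤ x i)).card)
                  = 2 ^ I.card * 2 * (T2.filter (fun x => m ≤ x i)).card := by ring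
                _ ≤ _ := Nat.mul_le_mul_left _ this

/-- Lemma 6.1: the balanced-partition lemma. -/
theorem stmt6 (n k : ℕ) (hn : 1 ≤ n) (S : Finset (Pt k))
    (hS : ∀ x ∈ S, inGrid n k x)
    (I : Finset (Fin k)) (hI : I.Nonempty) :
    ∃ (q : Pt k) (φ : Fin k → ℤ), inGrid n k q ∧ (∀ i ∈ I, φ i = 1 ∨ φ i = -1) ∧
      S.card ≤ 2 ^ I.card *
        {x ∈ (S : Set (Pt k)) | ∀ i ∈ I, 0 ≤ φ i * (x i - q i)}.ncard ∧
      S.card ≤ 2 ^ I.card *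
        {x ∈ (S : Set (Pt k)) | ∀ i ∈ I, φ i * (x i - q i) ≤ 0}.ncard := by
  classical
  obtain ⟨q, φ, hq, hφ, h1, h2⟩ := balanced_aux n k hn S hS I
  refine ⟨q, φ, hq, hφ, ?_, ?_⟩
  · have he : {x ∈ (S : Set (Pt k)) | ∀ i ∈ I, 0 ≤ φ i * (x i - q i)}
        = ↑(S.filter (fun x => ∀ i ∈ I, 0 ≤ φ i * (x i - q i))) := by
      ext x; simp
    rw [he, Set.ncard_coe_finset]
    exact h1
  · have he : {x ∈ (S : Set (Pt k)) | ∀ i ∈ I, φ i * (x i - q i) ≤ 0}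
        = ↑(S.filter (fun x => ∀ i ∈ I, φ i * (x i - q i) ≤ 0)) := by
      ext x; simp
    rw [he, Set.ncard_coe_finset]
    exact h2
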